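/- arXiv:1207.7233 — 3 statements merged into one kernel-verified Lean document; each statement's English description precedes it below -/
import Mathlib

section
/- Let R be a commutative Noetherian ring and M a finitely generated R-module such that every associated prime of M is a minimal prime over the annihilator ann(M). Assume that for every minimal prime P over ann(M), the localization (R/ann(M))_P is a reduced ring. Then ann(M) is a radical ideal, i.e., ann(M) equals the intersection of the minimal primes over it. -/
/-! If `r ^ n` kills `M`, then at each associated prime `P` (minimal over `ann M` by assumption)
the image of `r` in the reduced ring `(R ⧸ ann M)_P` is nilpotent, hence zero, so some `t ∉ P`
has `t * r ∈ ann M`. An element of `M` killed by some `t ∉ P` for every associated prime `P` is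
zero, because in a Noetherian ring the annihilator of a nonzero element lies in an associated
prime. Hence `r • m = 0` for all `m`, i.e. `ann M` is radical. -/

theorem Module.eq_zero_of_forall_associatedPrimes_exists_smul_eq_zero
    {R M : Type*} [CommRing R] [IsNoetherianRing R] [AddCommGroup M] [Module R M] {x : M}
    (hx : ∀ P ∈ associatedPrimes R M, ∃ t ∉ P, t • x = 0) : x = 0 := by
  by_contra hx0
  obtain ⟨P, hP, hann⟩ := exists_le_isAssociatedPrime_of_isNoetherianRing R x hx0
  obtain ⟨t, htP, htx⟩ := hx P hP
  exact htP (hann (Submodule.mem_colon_singleton.mpr (by simpa using htx)))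

theorem Module.mem_annihilator_of_forall_associatedPrimes_exists_mul_mem
    {R M : Type*} [CommRing R] [IsNoetherianRing R] [AddCommGroup M] [Module R M] {r : R}
    (hr : ∀ P ∈ associatedPrimes R M, ∃ t ∉ P, t * r ∈ Module.annihilator R M) :
    r ∈ Module.annihilator R M :=
  Module.mem_annihilator.mpr fun m =>
    Module.eq_zero_of_forall_associatedPrimes_exists_smul_eq_zero fun P hP =>
      let ⟨t, htP, htr⟩ := hr P hP
      ⟨t, htP, by rw [smul_smul, Module.mem_annihilator.mp htr]⟩

theorem IsNilpotent.exists_notMem_mul_eq_zero_of_isReduced_localization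
    {A : Type*} [CommRing A] (Q : Ideal A) [Q.IsPrime] [IsReduced (Localization.AtPrime Q)]
    {a : A} (ha : IsNilpotent a) : ∃ s ∉ Q, s * a = 0 := by
  have hzero : algebraMap A (Localization.AtPrime Q) a = 0 :=
    (ha.map (algebraMap A (Localization.AtPrime Q))).eq_zero
  obtain ⟨⟨s, hs⟩, hsa⟩ := (IsLocalization.map_eq_zero_iff Q.primeCompl _ a).mp hzero
  exact ⟨s, hs, hsa⟩

theorem Ideal.exists_notMem_mul_mem_of_mem_radical {R : Type*} [CommRing R] {I P : Ideal R}
    (hIP : I ≤ P) [(P.map (Ideal.Quotient.mk I)).IsPrime]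
    [IsReduced (Localization.AtPrime (P.map (Ideal.Quotient.mk I)))]
    {r : R} (hr : r ∈ I.radical) : ∃ t ∉ P, t * r ∈ I := by
  obtain ⟨n, hn⟩ := hr
  have hnil : IsNilpotent (Ideal.Quotient.mk I r) :=
    ⟨n, by rw [← map_pow, Ideal.Quotient.eq_zero_iff_mem.mpr hn]⟩
  obtain ⟨s, hs, hsr⟩ :=
    hnil.exists_notMem_mul_eq_zero_of_isReduced_localization (P.map (Ideal.Quotient.mk I))
  obtain ⟨t, rfl⟩ := Ideal.Quotient.mk_surjective s
  refine ⟨t, fun htP => hs ((Ideal.mem_quotient_iff_mem hIP).mpr htP), ?_⟩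
  rwa [← map_mul, Ideal.Quotient.eq_zero_iff_mem] at hsr

theorem stmt2_general (R : Type*) [CommRing R] [IsNoetherianRing R]
    (M : Type*) [AddCommGroup M] [Module R M]
    (h1 : ∀ P ∈ associatedPrimes R M, P ∈ (Module.annihilator R M).minimalPrimes)
    (h2 : ∀ (P : Ideal R), P ∈ (Module.annihilator R M).minimalPrimes →
      ∀ (hQ : (P.map (Ideal.Quotient.mk (Module.annihilator R M))).IsPrime),
        IsReduced (@Localization.AtPrime (R ⧸ Module.annihilator R M) _
          (P.map (Ideal.Quotient.mk (Module.annihilator R M))) hQ)) :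
    Module.annihilator R M = sInf (Module.annihilator R M).minimalPrimes ∧
      (Module.annihilator R M).IsRadical := by
  have hrad : (Module.annihilator R M).IsRadical := fun r hr =>
    Module.mem_annihilator_of_forall_associatedPrimes_exists_mul_mem fun P hP => by
      have hPmin := h1 P hP
      have hPprime : P.IsPrime := hPmin.1.1
      have hIP := hPmin.1.2
      have hQ : (P.map (Ideal.Quotient.mk (Module.annihilator R M))).IsPrime :=
        Ideal.map_isPrime_of_surjective Ideal.Quotient.mk_surjective (Ideal.mk_ker.trans_le hIP)
      have := h2 P hPmin hQ
      exact Ideal.exists_notMem_mul_mem_of_mem_radical hIP hr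
  exact ⟨by rw [Ideal.sInf_minimalPrimes, hrad.radical], hrad⟩

/-- Let `R` be a commutative Noetherian ring and `M` a finitely
generated `R`-module such that every associated prime of `M` is a minimal prime
over `ann(M)`.  Assume that for every minimal prime `P` over `ann(M)` the
localization `(R/ann(M))_P` is reduced.  Then `ann(M)` is a radical ideal, i.e.
it equals the intersection of the minimal primes over it. -/
theorem stmt2 (R : Type*) [CommRing R] [IsNoetherianRing R]
    (M : Type*) [AddCommGroup M] [Module R M] [Module.Finite R M]
    (h1 : ∀ P ∈ associatedPrimes R M, P ∈ (Module.annihilator R M).minimalPrimes)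
    (h2 : ∀ (P : Ideal R), P ∈ (Module.annihilator R M).minimalPrimes →
      ∀ (hQ : (P.map (Ideal.Quotient.mk (Module.annihilator R M))).IsPrime),
        IsReduced (@Localization.AtPrime (R ⧸ Module.annihilator R M) _
          (P.map (Ideal.Quotient.mk (Module.annihilator R M))) hQ)) :
    Module.annihilator R M = sInf (Module.annihilator R M).minimalPrimes ∧
      (Module.annihilator R M).IsRadical :=
  stmt2_general R M h1 h2
end

section
/- For every integer n ≥ 2, the number of tuples (k_1, ..., k_{n−1}) with each k_i ∈ {1, 2, ..., n−1} such that for all indices 1 ≤ r ≤ s ≤ n−1 the partial sum k_r + k_{r+1} + ... + k_s is not divisible by n, equals (n−1)!. -/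
/-!
Reduction mod `n` identifies these tuples with the tuples of residues all of whose interval sums
are nonzero (the one-term sums force the entries themselves to be nonzero). Their
partial sums `S₀ = 0, S₁, …, S_{n-1}` in `ZMod n` turn the interval sums into differences
`S_{s+1} - S_r`, so the condition says exactly that `S` is injective. Hence `S₁, …, S_{n-1}`
is an ordering of the `n - 1` nonzero residues, and conversely every such ordering arises.
-/

open scoped BigOperators

open Finset Function

namespace Fin

variable {G : Type*} [AddCommGroup G] {m : ℕ}

theorem injective_iff_forall_le_ne {α : Type*} (S : Fin (m + 1) → α) :
    Injective S ↔ ∀ r s : Fin m, r ≤ s → S s.succ ≠ S r.castSucc := by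
  refine ⟨fun hS r s hrs heq => (castSucc_lt_succ_iff.2 hrs).ne' (hS heq),
    fun h => .of_lt_imp_ne fun a b hab => ?_⟩
  have ha : a ≠ last m := (hab.trans_le (le_last b)).ne
  have hb : b ≠ 0 := (zero_le a |>.trans_lt hab).ne'
  have hle : a.castPred ha ≤ b.pred hb := by
    rw [le_def, coe_castPred, val_pred]
    rw [lt_def] at hab
    omega
  simpa using (h _ _ hle).symm

theorem sum_Icc_eq_partialSum_sub (k : Fin m → G) {r s : Fin m} (hrs : r ≤ s) :
    ∑ i ∈ Icc r s, k i = partialSum k s.succ - partialSum k r.castSucc := by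
  rw [← sum_Icc_sub hrs]
  simp only [partialSum_succ, add_sub_cancel_left]

theorem injective_partialSum_iff (k : Fin m → G) :
    Injective (partialSum k) ↔ ∀ r s : Fin m, r ≤ s → ∑ i ∈ Icc r s, k i ≠ 0 := by
  rw [injective_iff_forall_le_ne]
  refine forall₂_congr fun r s => forall_congr' fun hrs => ?_
  rw [sum_Icc_eq_partialSum_sub k hrs, sub_ne_zero]

def partialSumEquiv : (Fin m → G) ≃ {S : Fin (m + 1) → G // S 0 = 0} where
  toFun k := ⟨partialSum k, partialSum_zero k⟩
  invFun S i := S.1 i.succ - S.1 i.castSucc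
  left_inv k := funext fun i => by simp only [partialSum_succ, add_sub_cancel_left]
  right_inv S := Subtype.ext <| by
    simpa only [S.2, zero_vadd, neg_add_eq_sub] using partialSum_left_neg S.1

def injectiveVanishingAtZeroEquivEmbedding :
    {S : {S : Fin (m + 1) → G // S 0 = 0} // Injective S.1} ≃
      (Fin m ↪ {x : G // x ≠ 0}) where
  toFun S := ⟨fun i => ⟨S.1.1 i.succ, fun h => succ_ne_zero i (S.2 (h.trans S.1.2.symm))⟩,
    fun i j hij => succ_injective _ (S.2 (congrArg Subtype.val hij))⟩
  invFun f := ⟨⟨cons 0 fun i => (f i).1, rfl⟩, cons_injective_iff.2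
    ⟨fun ⟨i, hi⟩ => (f i).2 hi, fun i j hij => f.injective (Subtype.ext hij)⟩⟩
  left_inv S := by
    ext1; ext1
    conv_rhs => rw [← cons_self_tail S.1.1, S.1.2]
    rfl
  right_inv f := rfl

theorem card_sum_Icc_ne_zero [Finite G] :
    Nat.card {k : Fin m → G // ∀ r s : Fin m, r ≤ s → ∑ i ∈ Icc r s, k i ≠ 0} =
      (Nat.card G - 1).descFactorial m := by
  classical
  have := Fintype.ofFinite G
  rw [Nat.card_congr (partialSumEquiv.subtypeEquiv (q := fun S => Injective S.1)
      fun k => (injective_partialSum_iff k).symm),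
    Nat.card_congr injectiveVanishingAtZeroEquivEmbedding, Nat.card_eq_fintype_card,
    Fintype.card_embedding_eq, Fintype.card_fin, Fintype.card_subtype_compl,
    Fintype.card_subtype_eq, Nat.card_eq_fintype_card]

end Fin

def ZMod.natTupleCastEquiv (n m : ℕ) [NeZero n] :
    {k : Fin m → ℕ // (∀ i, k i ∈ Icc 1 (n - 1)) ∧
        ∀ r s : Fin m, r ≤ s → ¬ (n ∣ ∑ i ∈ Icc r s, k i)} ≃
      {k : Fin m → ZMod n // ∀ r s : Fin m, r ≤ s → ∑ i ∈ Icc r s, k i ≠ 0} where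
  toFun k := ⟨fun i => k.1 i, fun r s hrs => by
    rw [← Nat.cast_sum, Ne, ZMod.natCast_eq_zero_iff]
    exact k.2.2 r s hrs⟩
  invFun k := ⟨fun i => (k.1 i).val, fun i => by
      have hi : k.1 i ≠ 0 := by simpa using k.2 i i le_rfl
      rw [mem_Icc]
      exact ⟨Nat.one_le_iff_ne_zero.2 ((ZMod.val_ne_zero _).2 hi),
        Nat.le_sub_one_of_lt (ZMod.val_lt _)⟩,
    fun r s hrs => by
      rw [← ZMod.natCast_eq_zero_iff, Nat.cast_sum]
      simpa only [ZMod.natCast_zmod_val] using k.2 r s hrs⟩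
  left_inv k := Subtype.ext <| funext fun i =>
    ZMod.val_cast_of_lt (by have := mem_Icc.1 (k.2.1 i); omega)
  right_inv k := Subtype.ext <| funext fun i => ZMod.natCast_zmod_val _

/-- For every integer `n ≥ 2`, the number of tuples
`(k_1, …, k_{n-1})` with each `k_i ∈ {1, …, n-1}` such that no partial sum
`k_r + ⋯ + k_s` (for `1 ≤ r ≤ s ≤ n-1`) is divisible by `n`, equals `(n-1)!`. -/
theorem stmt6 (n : ℕ) (hn : 2 ≤ n) :
    Nat.card {k : Fin (n - 1) → ℕ //
        (∀ i, k i ∈ Finset.Icc 1 (n - 1)) ∧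
        ∀ r s : Fin (n - 1), r ≤ s → ¬ (n ∣ ∑ i ∈ Finset.Icc r s, k i)} =
      Nat.factorial (n - 1) := by
  have : NeZero n := ⟨by omega⟩
  rw [Nat.card_congr (ZMod.natTupleCastEquiv n (n - 1)), Fin.card_sum_Icc_ne_zero,
    Nat.card_zmod, Nat.descFactorial_self]
end

section
/- Let n ≥ 2 and consider in ℝ^{n−1} the (countable) family of hyperplanes H_{r,s,m} = {x : x_r + x_{r+1} + ... + x_s = m} for 1 ≤ r ≤ s ≤ n−1 and m ∈ ℤ. Only finitely many of these hyperplanes meet the open cube (0,1)^{n−1}, and the complement in (0,1)^{n−1} of their union has exactly (n−1)! connected components. -/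
/-!
Write `Z₀ = 0` and `Z_{j+1} = x₀ + ⋯ + x_j` for the prefix sums of `x : Fin N → ℝ`. Since
`∑_{r ≤ i ≤ s} x_i = Z_{s+1} - Z_r`, a point of the open cube lies on none of the hyperplanes
exactly when the fractional parts of `Z₀, …, Z_N` are pairwise distinct. Taking fractional parts
of the prefix sums is then a homeomorphism from the complement onto the space of injective
`y : Fin N → (0, 1)`, with inverse `y ↦ (fract (y_k - y_{k-1}))_k` where `y_{-1} = 0`. That space
is the disjoint union of the `N!` open convex chambers `y_{σ 0} < ⋯ < y_{σ (N-1)}`.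
Finiteness is simpler: a hyperplane meeting the cube has `0 ≤ m ≤ N`.
-/

open Finset Function Int
open Matrix (vecCons cons_val_zero cons_val_succ)

theorem Homeomorph.nat_card_connectedComponents_eq {X Y : Type*} [TopologicalSpace X]
    [TopologicalSpace Y] (h : X ≃ₜ Y) :
    Nat.card (ConnectedComponents X) = Nat.card (ConnectedComponents Y) :=
  Nat.card_congr (h.isQuotientMap.isCoinducing.connectedComponentsHomeomorph fun y => by
    simpa using isConnected_singleton).toEquiv

theorem nat_card_connectedComponents_of_partition {X ι : Type*} [TopologicalSpace X]
    (U : ι → Set X) (hopen : ∀ i, IsOpen (U i)) (hconn : ∀ i, IsPreconnected (U i))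
    (hne : ∀ i, (U i).Nonempty) (hdisj : Pairwise (Disjoint on U))
    (hcover : ∀ x, ∃ i, x ∈ U i) :
    Nat.card (ConnectedComponents X) = Nat.card ι := by
  have eq_of_mem {i j : ι} {x : X} (hi : x ∈ U i) (hj : x ∈ U j) : i = j :=
    by_contra fun h => Set.disjoint_left.1 (hdisj h) hi hj
  have hclopen (i : ι) : IsClopen (U i) := by
    refine ⟨⟨isOpen_iff_forall_mem_open.2 fun x hx => ?_⟩, hopen i⟩
    obtain ⟨j, hj⟩ := hcover x
    exact ⟨U j, fun y hy hyi => hx (eq_of_mem hyi hy ▸ hj), hopen j, hj⟩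
  choose p hp using hne
  refine (Nat.card_eq_of_bijective (fun i => ConnectedComponents.mk (p i)) ⟨?_, ?_⟩).symm
  · intro i j hij
    exact eq_of_mem (hp i)
      ((hclopen j).connectedComponent_subset (hp j) (ConnectedComponents.coe_eq_coe'.1 hij))
  · rintro ⟨x⟩
    obtain ⟨i, hi⟩ := hcover x
    exact ⟨i, ConnectedComponents.coe_eq_coe'.2 ((hconn i).subset_connectedComponent hi (hp i))⟩

theorem convex_setOf_strictMono_comp {ι κ : Type*} [PartialOrder κ] (σ : κ → ι) :
    Convex ℝ {y : ι → ℝ | StrictMono (y ∘ σ)} := by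
  intro y (hy : StrictMono (y ∘ σ)) z (hz : StrictMono (z ∘ σ)) a b ha hb hab
  rcases ha.eq_or_lt with rfl | ha
  · rw [zero_add] at hab
    simpa [hab] using hz
  · intro i j hij
    simp only [comp_apply, Pi.add_apply, Pi.smul_apply, smul_eq_mul]
    exact (hy.const_mul ha).add_monotone
      (fun _ _ h => mul_le_mul_of_nonneg_left (hz.monotone h) hb) hij

theorem isOpen_setOf_strictMono_comp {ι κ : Type*} [Preorder κ] [Finite κ]
    (σ : κ → ι) : IsOpen {y : ι → ℝ | StrictMono (y ∘ σ)} := by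
  simp only [StrictMono, Set.ofPred_forall]
  exact isOpen_iInter_of_finite fun a => isOpen_iInter_of_finite fun b =>
    isOpen_iInter_of_finite fun _ => isOpen_lt (continuous_apply _) (continuous_apply _)

theorem Tuple.eq_sort_of_strictMono {n : ℕ} {α : Type*} [LinearOrder α] {f : Fin n → α}
    {σ : Equiv.Perm (Fin n)} (h : StrictMono (f ∘ σ)) : σ = Tuple.sort f :=
  Tuple.eq_sort_iff.2 ⟨h.monotone, fun _ _ hij he => absurd he (h hij).ne⟩

section PartialSum

variable {n : ℕ} {M : Type*}

theorem Fin.partialSum_eq_sum_filter [AddCommMonoid M] (x : Fin n → M) (j : Fin (n + 1)) :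
    Fin.partialSum x j = ∑ i with i.castSucc < j, x i := by
  induction j using Fin.induction with
  | zero => simp
  | succ j ih =>
    have hfilter : univ.filter (fun i : Fin n => i.castSucc < j.succ) =
        insert j (univ.filter fun i : Fin n => i.castSucc < j.castSucc) := by
      ext i
      simp only [mem_filter, mem_univ, true_and, mem_insert, Fin.lt_def, Fin.ext_iff,
        Fin.val_castSucc, Fin.val_succ]
      omega
    rw [Fin.partialSum_succ, ih, hfilter, sum_insert (by simp), add_comm]

theorem Fin.sum_Icc_eq_partialSum_sub_s17 [AddCommGroup M] (x : Fin n → M) {r s : Fin n}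
    (h : r ≤ s) :
    ∑ i ∈ Icc r s, x i = Fin.partialSum x s.succ - Fin.partialSum x r.castSucc := by
  rw [Fin.partialSum_eq_sum_filter, Fin.partialSum_eq_sum_filter, ← sum_sdiff_eq_sub]
  · congr 1
    ext i
    simp only [mem_Icc, mem_sdiff, mem_filter, mem_univ, true_and, Fin.lt_def, Fin.le_def,
      Fin.val_castSucc, Fin.val_succ] at h ⊢
    omega
  · intro i
    simp only [mem_filter, mem_univ, true_and, Fin.lt_def, Fin.le_def, Fin.val_castSucc,
      Fin.val_succ] at h ⊢
    omega

theorem Fin.continuous_partialSum [AddCommMonoid M] [TopologicalSpace M] [ContinuousAdd M]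
    (j : Fin (n + 1)) : Continuous fun x : Fin n → M => Fin.partialSum x j := by
  simp_rw [Fin.partialSum_eq_sum_filter]
  fun_prop

theorem Fin.forall_lt_iff_forall_le_castSucc_succ {P : Fin (n + 1) → Fin (n + 1) → Prop} :
    (∀ a b, a < b → P a b) ↔ ∀ r s : Fin n, r ≤ s → P r.castSucc s.succ := by
  refine ⟨fun h r s hrs => h _ _ (Fin.castSucc_lt_succ_iff.2 hrs), fun h a b hab => ?_⟩
  induction b using Fin.cases with
  | zero => exact absurd hab (Fin.not_lt_zero a)
  | succ s =>
    induction a using Fin.lastCases with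
    | last => exact absurd hab (Fin.le_last _).not_gt
    | cast r => exact h r s (Fin.castSucc_lt_succ_iff.1 hab)

end PartialSum

section Fract

variable {R : Type*} [CommRing R] [LinearOrder R] [FloorRing R] [IsOrderedRing R]

theorem fract_fract_sub_fract (a b : R) : fract (fract a - fract b) = fract (a - b) :=
  fract_eq_fract.2 ⟨⌊b⌋ - ⌊a⌋, by push_cast; linear_combination self_sub_fract b - self_sub_fract a⟩

theorem eq_of_fract_sub_eq_zero {u v : R} (hu : u ∈ Set.Ico 0 1) (hv : v ∈ Set.Ico 0 1)
    (h : fract (u - v) = 0) : u = v := by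
  obtain ⟨z, hz⟩ := fract_eq_zero_iff.1 h
  rw [← fract_eq_self.2 hu, ← fract_eq_self.2 hv]
  exact fract_eq_fract.2 ⟨z, hz.symm⟩

theorem fract_partialSum_fract_sub {n : ℕ} (g : Fin (n + 1) → R) (a : Fin (n + 1)) :
    fract (Fin.partialSum (fun k => fract (g k.succ - g k.castSucc)) a) = fract (g a - g 0) := by
  induction a using Fin.induction with
  | zero => simp
  | succ k ih =>
    obtain ⟨z, hz⟩ := fract_eq_fract.1 ih
    refine fract_eq_fract.2 ⟨z - ⌊g k.succ - g k.castSucc⌋, ?_⟩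
    rw [Fin.partialSum_succ]
    push_cast
    linear_combination hz - self_sub_fract (g k.succ - g k.castSucc)

end Fract

namespace IntervalSumArrangement

variable {N : ℕ}

def complement (N : ℕ) : Set (Fin N → ℝ) :=
  {x | (∀ i, 0 < x i ∧ x i < 1) ∧
    ∀ r s : Fin N, r ≤ s → ∀ m : ℤ, (∑ i ∈ Icc r s, x i) ≠ m}

def configSpace (N : ℕ) : Set (Fin N → ℝ) :=
  Set.univ.pi (fun _ => Set.Ioo 0 1) ∩ {y | Injective y}

def orderChamber (σ : Equiv.Perm (Fin N)) : Set (Fin N → ℝ) :=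
  Set.univ.pi (fun _ => Set.Ioo 0 1) ∩ {y | StrictMono (y ∘ σ)}

noncomputable def fracPrefixSums (x : Fin N → ℝ) : Fin N → ℝ :=
  fun j => fract (Fin.partialSum x j.succ)

noncomputable def fracDiffs (y : Fin N → ℝ) : Fin N → ℝ :=
  fun k => fract (vecCons 0 y k.succ - vecCons 0 y k.castSucc)

theorem mem_complement_iff {x : Fin N → ℝ} :
    x ∈ complement N ↔
      (∀ i, 0 < x i ∧ x i < 1) ∧ Injective fun a => fract (Fin.partialSum x a) := by
  refine and_congr_right fun _ => ?_
  rw [injective_iff_pairwise_ne, pairwise_iff_lt, Fin.forall_lt_iff_forall_le_castSucc_succ]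
  refine forall₂_congr fun r s => forall_congr' fun hrs => ?_
  rw [Fin.sum_Icc_eq_partialSum_sub_s17 x hrs, onFun, ne_comm, Ne, fract_eq_fract, not_exists]

theorem vecCons_zero_fracPrefixSums (x : Fin N → ℝ) :
    vecCons 0 (fracPrefixSums x) = fun a => fract (Fin.partialSum x a) := by
  ext a
  induction a using Fin.cases <;>
    simp only [cons_val_zero, cons_val_succ, fracPrefixSums, Fin.partialSum_zero, fract_zero]

theorem vecCons_zero_injective_iff {y : Fin N → ℝ} (hy : y ∈ Set.univ.pi fun _ => Set.Ioo 0 1) :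
    Injective (vecCons 0 y) ↔ Injective y :=
  Fin.cons_injective_iff.trans <| and_iff_right fun ⟨i, hi⟩ => (hy i trivial).1.ne' hi

theorem fracPrefixSums_mem_configSpace {x : Fin N → ℝ} (hx : x ∈ complement N) :
    fracPrefixSums x ∈ configSpace N := by
  have hinj := (mem_complement_iff.1 hx).2
  rw [← vecCons_zero_fracPrefixSums] at hinj
  obtain ⟨hzero, hinj⟩ := Fin.cons_injective_iff.1 hinj
  exact ⟨fun j _ => ⟨(fract_nonneg _).lt_of_ne fun h => hzero ⟨j, h.symm⟩, fract_lt_one _⟩, hinj⟩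

theorem vecCons_zero_mem_Ico {y : Fin N → ℝ} (hy : y ∈ Set.univ.pi fun _ => Set.Ioo 0 1)
    (a : Fin (N + 1)) : vecCons 0 y a ∈ Set.Ico 0 1 := by
  induction a using Fin.cases with
  | zero => simp
  | succ j => simpa using Set.Ioo_subset_Ico_self (hy j trivial)

theorem fract_partialSum_fracDiffs {y : Fin N → ℝ} (hy : y ∈ Set.univ.pi fun _ => Set.Ioo 0 1)
    (a : Fin (N + 1)) : fract (Fin.partialSum (fracDiffs y) a) = vecCons 0 y a := by
  unfold fracDiffs
  rw [fract_partialSum_fract_sub, cons_val_zero, sub_zero,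
    fract_eq_self.2 (vecCons_zero_mem_Ico hy a)]

theorem fract_pos_fracDiffs {y : Fin N → ℝ} (hy : y ∈ configSpace N) (k : Fin N) :
    0 < fract (vecCons 0 y k.succ - vecCons 0 y k.castSucc) :=
  (fract_nonneg _).lt_of_ne fun h => (Fin.castSucc_lt_succ (i := k)).ne' <|
    ((vecCons_zero_injective_iff hy.1).2 hy.2) <|
      eq_of_fract_sub_eq_zero (vecCons_zero_mem_Ico hy.1 _) (vecCons_zero_mem_Ico hy.1 _) h.symm

theorem fracDiffs_mem_complement {y : Fin N → ℝ} (hy : y ∈ configSpace N) :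
    fracDiffs y ∈ complement N := by
  refine mem_complement_iff.2 ⟨fun k => ⟨fract_pos_fracDiffs hy k, fract_lt_one _⟩, ?_⟩
  simp_rw [fract_partialSum_fracDiffs hy.1]
  exact (vecCons_zero_injective_iff hy.1).2 hy.2

theorem fracPrefixSums_fracDiffs {y : Fin N → ℝ} (hy : y ∈ configSpace N) :
    fracPrefixSums (fracDiffs y) = y := by
  ext j
  rw [fracPrefixSums, fract_partialSum_fracDiffs hy.1, cons_val_succ]

theorem fracDiffs_fracPrefixSums {x : Fin N → ℝ} (hx : ∀ i, 0 < x i ∧ x i < 1) :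
    fracDiffs (fracPrefixSums x) = x := by
  ext k
  rw [fracDiffs, vecCons_zero_fracPrefixSums, fract_fract_sub_fract, Fin.partialSum_succ,
    add_sub_cancel_left, fract_eq_self.2 ⟨(hx k).1.le, (hx k).2⟩]

theorem continuousOn_fracPrefixSums : ContinuousOn fracPrefixSums (complement N) := by
  intro x hx
  refine (continuousAt_pi.2 fun j => ?_).continuousWithinAt
  have hpos : 0 < fracPrefixSums x j := ((fracPrefixSums_mem_configSpace hx).1 j trivial).1
  exact (continuousAt_fract (fract_pos.1 hpos)).comp
    (f := fun x : Fin N → ℝ => Fin.partialSum x j.succ) (Fin.continuous_partialSum _).continuousAt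

theorem continuousOn_fracDiffs : ContinuousOn fracDiffs (configSpace N) := by
  intro y hy
  refine (continuousAt_pi.2 fun k => ?_).continuousWithinAt
  have hcons : Continuous fun y : Fin N → ℝ => vecCons 0 y := continuous_const.finCons continuous_id
  exact (continuousAt_fract (fract_pos.1 (fract_pos_fracDiffs hy k))).comp
    (f := fun y : Fin N → ℝ => vecCons 0 y k.succ - vecCons 0 y k.castSucc)
    (((continuous_apply _).comp hcons).sub ((continuous_apply _).comp hcons)).continuousAt

noncomputable def fracPrefixSumsHomeomorph (N : ℕ) : complement N ≃ₜ configSpace N where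
  toFun x := ⟨fracPrefixSums x, fracPrefixSums_mem_configSpace x.2⟩
  invFun y := ⟨fracDiffs y, fracDiffs_mem_complement y.2⟩
  left_inv x := Subtype.ext (fracDiffs_fracPrefixSums x.2.1)
  right_inv y := Subtype.ext (fracPrefixSums_fracDiffs y.2)
  continuous_toFun := continuousOn_fracPrefixSums.domRestrict.subtype_mk _
  continuous_invFun := continuousOn_fracDiffs.domRestrict.subtype_mk _

theorem isOpen_orderChamber (σ : Equiv.Perm (Fin N)) : IsOpen (orderChamber σ) :=
  (isOpen_set_pi Set.finite_univ fun _ _ => isOpen_Ioo).inter (isOpen_setOf_strictMono_comp σ)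

theorem convex_orderChamber (σ : Equiv.Perm (Fin N)) : Convex ℝ (orderChamber σ) :=
  (convex_pi fun _ _ => convex_Ioo 0 1).inter (convex_setOf_strictMono_comp σ)

theorem orderChamber_nonempty (σ : Equiv.Perm (Fin N)) : (orderChamber σ).Nonempty := by
  refine ⟨fun i => ((σ.symm i : ℕ) + 1) / (N + 1), fun i _ => ⟨by positivity, ?_⟩, ?_⟩
  · rw [div_lt_one (by positivity)]
    exact_mod_cast Nat.succ_lt_succ (σ.symm i).isLt
  · intro a b hab
    simp only [comp_apply, Equiv.symm_apply_apply]
    gcongr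
    exact_mod_cast hab

theorem orderChamber_subset_configSpace (σ : Equiv.Perm (Fin N)) :
    orderChamber σ ⊆ configSpace N :=
  fun _ hy => ⟨hy.1, hy.2.injective.of_comp_right σ.surjective⟩

theorem mem_orderChamber_sort {y : Fin N → ℝ} (hy : y ∈ configSpace N) :
    y ∈ orderChamber (Tuple.sort y) :=
  ⟨hy.1, (Tuple.monotone_sort y).strictMono_of_injective (hy.2.comp (Equiv.injective _))⟩

theorem eq_of_mem_orderChamber {σ τ : Equiv.Perm (Fin N)} {y : Fin N → ℝ}
    (hσ : y ∈ orderChamber σ) (hτ : y ∈ orderChamber τ) : σ = τ :=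
  (Tuple.eq_sort_of_strictMono hσ.2).trans (Tuple.eq_sort_of_strictMono hτ.2).symm

theorem nat_card_connectedComponents_configSpace (N : ℕ) :
    Nat.card (ConnectedComponents (configSpace N)) = N.factorial := by
  rw [show N.factorial = Nat.card (Equiv.Perm (Fin N)) by rw [Nat.card_perm, Nat.card_fin]]
  refine nat_card_connectedComponents_of_partition (fun σ => Subtype.val ⁻¹' orderChamber σ)
    (fun σ => (isOpen_orderChamber σ).preimage continuous_subtype_val) (fun σ => ?_)
    (fun σ => ?_)
    (fun σ τ hστ => Set.disjoint_left.2 fun _ hσ hτ => hστ (eq_of_mem_orderChamber hσ hτ))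
    (fun y => ⟨_, mem_orderChamber_sort y.2⟩)
  · rw [← Topology.IsInducing.subtypeVal.isPreconnected_image, Subtype.image_preimage_coe,
      Set.inter_eq_right.2 (orderChamber_subset_configSpace σ)]
    exact (convex_orderChamber σ).isPreconnected
  · obtain ⟨y, hy⟩ := orderChamber_nonempty σ
    exact ⟨⟨y, orderChamber_subset_configSpace σ hy⟩, hy⟩

theorem finite_setOf_hyperplane_meets_cube (N : ℕ) :
    Set.Finite {p : Fin N × Fin N × ℤ | p.1 ≤ p.2.1 ∧
      ∃ x : Fin N → ℝ, (∀ i, 0 < x i ∧ x i < 1) ∧ (∑ i ∈ Icc p.1 p.2.1, x i) = p.2.2} := by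
  refine (Set.finite_univ.prod (Set.finite_univ.prod (Set.finite_Icc (0 : ℤ) N))).subset ?_
  rintro ⟨r, s, m⟩ ⟨-, x, hx, hsum⟩
  refine ⟨trivial, trivial, ?_⟩
  have hnonneg : (0 : ℝ) ≤ m := hsum ▸ sum_nonneg fun i _ => (hx i).1.le
  have hle : (m : ℝ) ≤ N := hsum ▸ (sum_le_card_nsmul _ _ 1 fun i _ => (hx i).2.le).trans
    (by simpa using card_le_univ (Icc r s))
  exact ⟨by exact_mod_cast hnonneg, by exact_mod_cast hle⟩

end IntervalSumArrangement

theorem stmt17_general (n : ℕ) :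
    Set.Finite {p : Fin (n - 1) × Fin (n - 1) × ℤ | p.1 ≤ p.2.1 ∧
      ∃ x : Fin (n - 1) → ℝ, (∀ i, 0 < x i ∧ x i < 1) ∧
        (∑ i ∈ Finset.Icc p.1 p.2.1, x i) = p.2.2} ∧
    Nat.card (ConnectedComponents
      ({x : Fin (n - 1) → ℝ | (∀ i, 0 < x i ∧ x i < 1) ∧
        ∀ r s : Fin (n - 1), r ≤ s → ∀ m : ℤ,
          (∑ i ∈ Finset.Icc r s, x i) ≠ m} : Set (Fin (n - 1) → ℝ))) =
      Nat.factorial (n - 1) :=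
  ⟨IntervalSumArrangement.finite_setOf_hyperplane_meets_cube (n - 1),
    (IntervalSumArrangement.fracPrefixSumsHomeomorph (n - 1)).nat_card_connectedComponents_eq
      |>.trans (IntervalSumArrangement.nat_card_connectedComponents_configSpace (n - 1))⟩

/-- For `n ≥ 2` consider in `ℝ^{n-1}` the hyperplanes
`H_{r,s,m} = {x : x_r + ⋯ + x_s = m}` for `1 ≤ r ≤ s ≤ n-1` and `m ∈ ℤ`.
Only finitely many of them meet the open cube `(0,1)^{n-1}`, and the complement
in `(0,1)^{n-1}` of their union has exactly `(n-1)!` connected components. -/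
theorem stmt17 (n : ℕ) (hn : 2 ≤ n) :
    Set.Finite {p : Fin (n - 1) × Fin (n - 1) × ℤ | p.1 ≤ p.2.1 ∧
      ∃ x : Fin (n - 1) → ℝ, (∀ i, 0 < x i ∧ x i < 1) ∧
        (∑ i ∈ Finset.Icc p.1 p.2.1, x i) = p.2.2} ∧
    Nat.card (ConnectedComponents
      ({x : Fin (n - 1) → ℝ | (∀ i, 0 < x i ∧ x i < 1) ∧
        ∀ r s : Fin (n - 1), r ≤ s → ∀ m : ℤ,
          (∑ i ∈ Finset.Icc r s, x i) ≠ m} : Set (Fin (n - 1) → ℝ))) =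
      Nat.factorial (n - 1) :=
  stmt17_general n
end
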